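/- For the Werner state W = (1-p)·I₄/4 + p|Ψ⁻⟩⟨Ψ⁻| with p∈[0,1] and Ψ⁻ = (|01⟩-|10⟩)/√2, one has m(W) = 2p² and, writing s = S_L(W), m(W) = 2 - 2s. -/

import Mathlib

open Matrix Kronecker Complex ComplexOrder

noncomputable section
open scoped Classical

/-- Pauli matrices. -/
def pauli : Fin 3 → Matrix (Fin 2) (Fin 2) ℂ
  | 0 => !![0, 1; 1, 0]
  | 1 => !![0, -Complex.I; Complex.I, 0]
  | 2 => !![1, 0; 0, -1]

/-- Kronecker product of two one-qubit operators, reindexed to a 4×4 matrix. -/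
def kron4 (A B : Matrix (Fin 2) (Fin 2) ℂ) : Matrix (Fin 4) (Fin 4) ℂ :=
  Matrix.reindex finProdFinEquiv finProdFinEquiv (A ⊗ₖ B)

/-- A density matrix: positive semidefinite with unit trace. -/
def IsDensity {n : ℕ} (ρ : Matrix (Fin n) (Fin n) ℂ) : Prop :=
  ρ.PosSemidef ∧ ρ.trace = 1

/-- The spin-flipped matrix ρ̃ = (σ₂⊗σ₂) ρ̄ (σ₂⊗σ₂). -/
def tildeMat (ρ : Matrix (Fin 4) (Fin 4) ℂ) : Matrix (Fin 4) (Fin 4) ℂ :=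
  kron4 (pauli 1) (pauli 1) * ρ.map (starRingEnd ℂ) * kron4 (pauli 1) (pauli 1)

/-- Positive square root of a positive semidefinite matrix (0 otherwise). -/
def msqrt {n : ℕ} (A : Matrix (Fin n) (Fin n) ℂ) : Matrix (Fin n) (Fin n) ℂ :=
  if h : A.PosSemidef then (h.1.eigenvectorUnitary : Matrix (Fin n) (Fin n) ℂ) *
    diagonal ((↑) ∘ (√·) ∘ h.1.eigenvalues) * (star h.1.eigenvectorUnitary : Matrix (Fin n) (Fin n) ℂ) else 0

/-- ρ̂ = √(√ρ ρ̃ √ρ). -/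
def hatMat (ρ : Matrix (Fin 4) (Fin 4) ℂ) : Matrix (Fin 4) (Fin 4) ℂ :=
  msqrt (msqrt ρ * tildeMat ρ * msqrt ρ)

/-- Eigenvalues of a Hermitian matrix (0 otherwise). -/
def evalsC {n : ℕ} (A : Matrix (Fin n) (Fin n) ℂ) : Fin n → ℝ :=
  if h : A.IsHermitian then h.eigenvalues else 0

/-- The concurrence C(ρ) = max(0, 2 λ_max(ρ̂) − tr ρ̂). -/
def concurrence (ρ : Matrix (Fin 4) (Fin 4) ℂ) : ℝ :=
  max 0 (2 * (⨆ i, evalsC (hatMat ρ) i) - ∑ i, evalsC (hatMat ρ) i)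

/-- Correlation matrix T_ρ with entries tr(ρ σₙ⊗σₘ). -/
def Tmat (ρ : Matrix (Fin 4) (Fin 4) ℂ) : Matrix (Fin 3) (Fin 3) ℝ :=
  fun n m => ((ρ * kron4 (pauli n) (pauli m)).trace).re

/-- U_ρ = T_ρᵀ T_ρ. -/
def Umat (ρ : Matrix (Fin 4) (Fin 4) ℂ) : Matrix (Fin 3) (Fin 3) ℝ :=
  (Tmat ρ)ᵀ * Tmat ρ

/-- Eigenvalues of a real symmetric matrix (0 otherwise). -/
def evalsR {n : ℕ} (A : Matrix (Fin n) (Fin n) ℝ) : Fin n → ℝ :=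
  if h : A.IsHermitian then h.eigenvalues else 0

/-- The Horodecki quantity m(ρ) = max_{j<k} (u_j + u_k). -/
def mval (ρ : Matrix (Fin 4) (Fin 4) ℂ) : ℝ :=
  (Finset.univ.filter (fun p : Fin 3 × Fin 3 => p.1 < p.2)).sup'
    (by decide) (fun p => evalsR (Umat ρ) p.1 + evalsR (Umat ρ) p.2)

/-- Normalized linear entropy S_L(ρ) = (4/3)(1 − tr ρ²). -/
def linEntropy (ρ : Matrix (Fin 4) (Fin 4) ℂ) : ℝ :=
  (4/3) * (1 - ((ρ * ρ).trace).re)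

/-- The class E₀ state with parameters a, b, c, θ. -/
def rhoE0 (a b c θ : ℝ) : Matrix (Fin 4) (Fin 4) ℂ :=
  !![0, 0, 0, 0;
     0, (a : ℂ), (c/2 : ℂ) * Complex.exp (θ * Complex.I), 0;
     0, (c/2 : ℂ) * Complex.exp (-θ * Complex.I), (b : ℂ), 0;
     0, 0, 0, ((1 - a - b : ℝ) : ℂ)]

/-- The maximal-CHSH-violation states ρ_MVB. -/
def rhoMVB (β θ : ℝ) : Matrix (Fin 4) (Fin 4) ℂ :=
  rhoE0 (1/2) (1/2) (Real.sqrt (β - 1)) θ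

/-- The singlet state Ψ⁻ = (|01⟩ − |10⟩)/√2. -/
def psiMinus : Fin 4 → ℂ := ![0, 1 / Real.sqrt 2, -(1 / Real.sqrt 2), 0]

/-- The Werner state W = (1−p) I₄/4 + p |Ψ⁻⟩⟨Ψ⁻|. -/
def wernerState (p : ℝ) : Matrix (Fin 4) (Fin 4) ℂ :=
  ((1 - p : ℝ) / 4 : ℂ) • (1 : Matrix (Fin 4) (Fin 4) ℂ) +
    (p : ℂ) • Matrix.vecMulVec psiMinus (fun i => starRingEnd ℂ (psiMinus i))


lemma evalsR_smul_one (c : ℝ) (i : Fin 3) :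
    evalsR (c • (1 : Matrix (Fin 3) (Fin 3) ℝ)) i = c := by
  have h : (c • (1 : Matrix (Fin 3) (Fin 3) ℝ)).IsHermitian := by
    unfold Matrix.IsHermitian
    simp [Matrix.conjTranspose_smul]
  rw [evalsR, dif_pos h]
  have hm := h.mulVec_eigenvectorBasis i
  have hv : (WithLp.equiv 2 _) (h.eigenvectorBasis i) ≠ 0 := by
    intro h0
    exact h.eigenvectorBasis.orthonormal.ne_zero i
      ((WithLp.equiv 2 _).injective (by simpa using h0))
  rw [Matrix.smul_mulVec, Matrix.one_mulVec] at hm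
  have heq : (c - h.eigenvalues i) • (WithLp.equiv 2 _) (h.eigenvectorBasis i) = 0 := by
    rw [sub_smul, show (WithLp.equiv 2 _) (h.eigenvectorBasis i) = (h.eigenvectorBasis i).ofLp from rfl,
      hm, sub_self]
  rcases smul_eq_zero.mp heq with h1 | h1
  · linarith [sub_eq_zero.mp h1]
  · exact absurd h1 hv

lemma kron4_eq (A B : Matrix (Fin 2) (Fin 2) ℂ) : kron4 A B =
    !![A 0 0 * B 0 0, A 0 0 * B 0 1, A 0 1 * B 0 0, A 0 1 * B 0 1;
       A 0 0 * B 1 0, A 0 0 * B 1 1, A 0 1 * B 1 0, A 0 1 * B 1 1;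
       A 1 0 * B 0 0, A 1 0 * B 0 1, A 1 1 * B 0 0, A 1 1 * B 0 1;
       A 1 0 * B 1 0, A 1 0 * B 1 1, A 1 1 * B 1 0, A 1 1 * B 1 1] := by
  ext i j
  fin_cases i <;> fin_cases j <;>
    simp [kron4, Matrix.reindex_apply, Matrix.kroneckerMap_apply] <;> rfl

lemma werner_eq (p : ℝ) : wernerState p =
    !![((1-p)/4 : ℂ), 0, 0, 0;
       0, ((1-p)/4 + p/2 : ℂ), (-(p/2) : ℂ), 0;
       0, (-(p/2) : ℂ), ((1-p)/4 + p/2 : ℂ), 0;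
       0, 0, 0, ((1-p)/4 : ℂ)] := by
  have hs : ((1 / Real.sqrt 2 : ℝ) : ℂ) * ((1 / Real.sqrt 2 : ℝ) : ℂ) = 1/2 := by
    rw [← Complex.ofReal_mul, div_mul_div_comm, Real.mul_self_sqrt (by norm_num)]
    norm_num
  ext i j
  fin_cases i <;> fin_cases j <;>
    simp [wernerState, psiMinus, Matrix.vecMulVec_apply, Matrix.one_apply,
      Matrix.vecHead, Matrix.vecTail, -Matrix.cons_vecMulVec, -Matrix.vecMulVec_cons] <;>
    push_cast <;> ring_nf <;>
    simp [mul_comm, hs] <;> push_cast <;> ring_nf <;>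
    exact Or.inl (by rw [sq, ← Complex.ofReal_mul,
      Real.mul_self_sqrt (by norm_num : (0:ℝ) ≤ 2)]; norm_num)

lemma Tmat_werner (p : ℝ) : Tmat (wernerState p) = (-p) • (1 : Matrix (Fin 3) (Fin 3) ℝ) := by
  rw [werner_eq]
  ext n m
  fin_cases n <;> fin_cases m <;>
    simp [Tmat, kron4_eq, pauli, Matrix.trace, Matrix.mul_apply, Fin.sum_univ_four,
      Matrix.one_apply, Matrix.vecHead, Matrix.vecTail] <;> ring_nf

lemma Umat_werner (p : ℝ) : Umat (wernerState p) = (p^2) • (1 : Matrix (Fin 3) (Fin 3) ℝ) := by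
  rw [Umat, Tmat_werner]
  rw [Matrix.transpose_smul, Matrix.transpose_one, Matrix.smul_mul, Matrix.mul_smul,
    one_mul, smul_smul]
  ring_nf

lemma linEntropy_werner (p : ℝ) : linEntropy (wernerState p) = 1 - p^2 := by
  rw [linEntropy, werner_eq]
  simp [Matrix.trace, Matrix.mul_apply, Fin.sum_univ_four, Matrix.vecHead, Matrix.vecTail]
  ring

/-- m(W) = 2p² and m(W) = 2 − 2 S_L(W). -/
theorem mval_werner (p : ℝ) (hp0 : 0 ≤ p) (hp1 : p ≤ 1) :
    mval (wernerState p) = 2 * p ^ 2 ∧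
    mval (wernerState p) = 2 - 2 * linEntropy (wernerState p) := by
  have hm : mval (wernerState p) = 2 * p ^ 2 := by
    unfold mval
    simp only [Umat_werner, evalsR_smul_one]
    rw [Finset.sup'_const]
    ring
  exact ⟨hm, by rw [hm, linEntropy_werner]; ring⟩

end
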